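/- arXiv:1410.3731 — 4 statements merged into one kernel-verified Lean document; each statement's English description precedes it below -/
import Mathlib

section
/- Let K be a nonarchimedean field with a discrete (nontrivial) valuation and let V be a K-Banach space with solid norm. Then V is isometrically isomorphic to a space c₀(E, K) for some index set E; i.e., every Banach space over a discretely valued field admits an orthogonal basis. -/
/-- `K` is discretely valued: the value group of `K` is generated by a uniformizer. -/
def DiscretelyValued (K : Type) [NontriviallyNormedField K] : Prop :=
  ∃ π : K, 0 < ‖π‖ ∧ ‖π‖ < 1 ∧ ∀ x : K, x ≠ 0 → ∃ n : ℤ, ‖x‖ = ‖π‖ ^ n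

/-!
Zorn's lemma gives a maximal orthonormal set `X ⊆ V`, orthonormal meaning that the norm of a
finite combination is the maximum of the norms of its coefficients. As `V` is complete and
ultrametric, `f ↦ ∑' x, f x • x` is a linear isometry `c₀(X, K) → V`, so its range is closed.
By maximality no unit vector is at distance `1` from the span of `X`; since the norm is solid
and the value group discrete, every unit vector is then within `‖π‖ < 1` of the range, and
Riesz's lemma forces the range to be all of `V`.
-/

open Filter Topology IsUltrametricDist ZeroAtInfty

lemma DiscretelyValued.exists_norm_le_of_norm_lt_one {K : Type} [NontriviallyNormedField K]
    (hK : DiscretelyValued K) : ∃ ρ < 1, ∀ c : K, ‖c‖ < 1 → ‖c‖ ≤ ρ := by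
  obtain ⟨π, hπ0, hπ1, hval⟩ := hK
  refine ⟨‖π‖, hπ1, fun c hc => ?_⟩
  rcases eq_or_ne c 0 with rfl | hc0
  · simp [hπ0.le]
  obtain ⟨n, hn⟩ := hval c hc0
  have hanti := zpow_right_strictAnti₀ hπ0 hπ1
  have hn0 : 0 < n := hanti.lt_iff_gt.mp (by rwa [zpow_zero, ← hn])
  calc ‖c‖ = ‖π‖ ^ n := hn
    _ ≤ ‖π‖ ^ (1 : ℤ) := hanti.le_iff_ge.mpr hn0
    _ = ‖π‖ := zpow_one _

section Orthonormal

variable (K : Type*) {V : Type*} [NormedField K] [NormedAddCommGroup V] [NormedSpace K V]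

def IsOrthonormalSet (X : Set V) : Prop :=
  ∀ s : Finset V, ↑s ⊆ X → ∀ a : V → K, ‖∑ x ∈ s, a x • x‖₊ = s.sup fun x => ‖a x‖₊

variable {K}

lemma IsOrthonormalSet.norm_eq_one {X : Set V} (hX : IsOrthonormalSet K X) {x : V}
    (hx : x ∈ X) : ‖x‖ = 1 := by
  simpa using congrArg NNReal.toReal (hX {x} (by simpa using hx) fun _ => (1 : K))

lemma IsOrthonormalSet.nnnorm_sum_comp {X : Set V} (hX : IsOrthonormalSet K X) {ι : Type*}
    {v : ι → V} (hv : Function.Injective v) (hvX : Set.range v ⊆ X) (s : Finset ι) (a : ι → K) :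
    ‖∑ i ∈ s, a i • v i‖₊ = s.sup fun i => ‖a i‖₊ := by
  classical
  have := hX (s.image v) (by simpa using (Set.image_subset_range v s).trans hvX)
    (Function.extend v a 0)
  rw [Finset.sum_image hv.injOn, Finset.sup_image] at this
  simpa [Function.comp_def, hv.extend_apply] using this

variable (K V) in
lemma exists_maximal_isOrthonormalSet : ∃ X : Set V, Maximal (IsOrthonormalSet K) X := by
  have hchains : ∀ c ⊆ {X : Set V | IsOrthonormalSet K X}, IsChain (· ⊆ ·) c → c.Nonempty →
      ∃ ub ∈ {X : Set V | IsOrthonormalSet K X}, ∀ s ∈ c, s ⊆ ub := by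
    intro c hcS hc hne
    refine ⟨⋃₀ c, fun s hs a => ?_, fun _ => Set.subset_sUnion_of_mem⟩
    rw [Set.sUnion_eq_biUnion] at hs
    obtain ⟨Y, hYc, hsY⟩ := hc.directedOn.exists_mem_subset_of_finset_subset_biUnion hne hs
    exact hcS hYc s hsY a
  have hempty : IsOrthonormalSet K (∅ : Set V) := fun s hs a => by
    simp [Finset.coe_eq_empty.mp (Set.subset_empty_iff.mp hs)]
  obtain ⟨X, -, hX⟩ := zorn_subset_nonempty _ hchains ∅ hempty
  exact ⟨X, hX⟩

end Orthonormal

section Ultrametric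

variable {K : Type*} {V : Type*} [NormedField K] [NormedAddCommGroup V] [NormedSpace K V]
  [IsUltrametricDist V]

lemma nnnorm_smul_add_eq_max {W : Submodule K V} {u : V} (hu : ‖u‖₊ = 1)
    (hW : ∀ w ∈ W, 1 ≤ ‖u - w‖₊) (c : K) {y : V} (hy : y ∈ W) :
    ‖c • u + y‖₊ = max ‖c‖₊ ‖y‖₊ := by
  have hcu : ‖c • u‖₊ = ‖c‖₊ := by rw [nnnorm_smul, hu, mul_one]
  have hc : ‖c‖₊ ≤ ‖c • u + y‖₊ := by
    rcases eq_or_ne c 0 with rfl | hc0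
    · simp
    calc ‖c‖₊ = ‖c‖₊ * 1 := (mul_one _).symm
      _ ≤ ‖c‖₊ * ‖u - -(c⁻¹ • y)‖₊ := by gcongr; exact hW _ (W.neg_mem (W.smul_mem _ hy))
      _ = ‖c • u + y‖₊ := by
        rw [← nnnorm_smul, smul_sub, smul_neg, smul_inv_smul₀ hc0, sub_neg_eq_add]
  refine le_antisymm ((nnnorm_add_le_max _ _).trans_eq (by rw [hcu])) (max_le hc ?_)
  calc ‖y‖₊ = ‖(c • u + y) + -(c • u)‖₊ := by rw [add_neg_cancel_comm]
    _ ≤ max ‖c • u + y‖₊ ‖c • u‖₊ := by rw [← nnnorm_neg (c • u)]; exact nnnorm_add_le_max _ _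
    _ = ‖c • u + y‖₊ := max_eq_left (hcu ▸ hc)

lemma IsOrthonormalSet.insert {X : Set V} (hX : IsOrthonormalSet K X) {u : V} (hu : ‖u‖₊ = 1)
    (hdist : ∀ w ∈ Submodule.span K X, 1 ≤ ‖u - w‖₊) : IsOrthonormalSet K (insert u X) := by
  classical
  intro s hs a
  by_cases hus : u ∈ s
  swap
  · exact hX s (fun x hx => (hs hx).resolve_left (by rintro rfl; exact hus hx)) a
  have hs' : ↑(s.erase u) ⊆ X := fun x hx =>
    (hs (Finset.mem_of_mem_erase hx)).resolve_left (Finset.ne_of_mem_erase hx)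
  rw [← Finset.insert_erase hus, Finset.sum_insert (Finset.notMem_erase u s), Finset.sup_insert,
    nnnorm_smul_add_eq_max hu hdist, hX _ hs' a]
  exact Submodule.sum_mem _ fun x hx => Submodule.smul_mem _ _ (Submodule.subset_span (hs' hx))

lemma IsOrthonormalSet.exists_norm_sub_lt_one_of_maximal {X : Set V}
    (hX : Maximal (IsOrthonormalSet K) X) {u : V} (hu : ‖u‖ = 1) :
    ∃ w ∈ Submodule.span K X, ‖u - w‖ < 1 := by
  by_contra! h
  have huX : u ∈ X :=
    hX.2 (hX.1.insert (NNReal.eq hu) h) (Set.subset_insert u X) (Set.mem_insert u X)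
  exact absurd (h u (Submodule.subset_span huX)) (by simp)

end Ultrametric

section ZeroAtInfty

variable {K : Type*} {V : Type*} [NormedField K] [NormedAddCommGroup V] [NormedSpace K V]
  [IsUltrametricDist V] [CompleteSpace V] {ι : Type*}

lemma summable_smul_of_tendsto_cofinite_zero {f : ι → K} {v : ι → V} (hv : ∀ i, ‖v i‖ ≤ 1)
    (hf : Tendsto f cofinite (𝓝 0)) : Summable fun i => f i • v i := by
  refine NonarchimedeanAddGroup.summable_of_tendsto_cofinite_zero
    (squeeze_zero_norm (fun i => ?_) (tendsto_zero_iff_norm_tendsto_zero.mp hf))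
  rw [norm_smul]
  exact mul_le_of_le_one_right (norm_nonneg _) (hv i)

lemma IsOrthonormalSet.norm_le_norm_tsum_smul {v : ι → V} (hX : IsOrthonormalSet K (Set.range v))
    (hv : Function.Injective v) {f : ι → K} (hf : Tendsto f cofinite (𝓝 0)) (i₀ : ι) :
    ‖f i₀‖ ≤ ‖∑' i, f i • v i‖ := by
  classical
  -- The finitely many coefficients of norm `≥ m / 2` dominate the tail, so the ultrametric
  -- inequality for head + tail is an equality.
  set m := ‖f i₀‖
  rcases (norm_nonneg (f i₀)).eq_or_lt with hm | hm
  · exact hm.symm.trans_le (norm_nonneg _)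
  have hv1 : ∀ i, ‖v i‖ = 1 := fun i => hX.norm_eq_one ⟨i, rfl⟩
  have hsmall : ∀ᶠ i in cofinite, ‖f i‖ < m / 2 :=
    (tendsto_zero_iff_norm_tendsto_zero.mp hf).eventually (gt_mem_nhds (half_pos hm))
  have hfin : {i | m / 2 ≤ ‖f i‖}.Finite := by simpa using eventually_cofinite.mp hsmall
  set t := hfin.toFinset
  have hi₀ : i₀ ∈ t := by simp [t, m, hm.le]
  have hhead : m ≤ ‖∑ i ∈ t, f i • v i‖ := by
    rw [← coe_nnnorm, hX.nnnorm_sum_comp hv le_rfl t f]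
    exact_mod_cast Finset.le_sup (f := fun i => ‖f i‖₊) hi₀
  have htail : ‖∑' i : ↥((t : Set ι)ᶜ), f i • v i‖ ≤ m / 2 := by
    refine norm_tsum_le_of_forall_le_of_nonneg (half_pos hm).le fun i => ?_
    have hi : (i : ι) ∉ t := i.2
    rw [norm_smul, hv1, mul_one]
    exact (not_le.mp (by simpa [t] using hi)).le
  rw [← (summable_smul_of_tendsto_cofinite_zero (fun i => (hv1 i).le) hf).sum_add_tsum_compl
    (s := t), norm_add_eq_max_of_norm_ne_norm (by linarith)]
  exact hhead.trans (le_max_left _ _)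

variable [TopologicalSpace ι] [DiscreteTopology ι]

lemma ZeroAtInftyContinuousMap.tendsto_cofinite_zero (f : C₀(ι, K)) :
    Tendsto f cofinite (𝓝 0) :=
  cocompact_eq_cofinite ι ▸ zero_at_infty f

lemma IsOrthonormalSet.summable_smul {v : ι → V} (hX : IsOrthonormalSet K (Set.range v))
    (f : C₀(ι, K)) : Summable fun i => f i • v i :=
  summable_smul_of_tendsto_cofinite_zero (fun i => (hX.norm_eq_one ⟨i, rfl⟩).le)
    f.tendsto_cofinite_zero

noncomputable def IsOrthonormalSet.tsumSMulLinearIsometry {v : ι → V}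
    (hX : IsOrthonormalSet K (Set.range v)) (hv : Function.Injective v) : C₀(ι, K) →ₗᵢ[K] V where
  toFun f := ∑' i, f i • v i
  map_add' f g := by
    simp only [ZeroAtInftyContinuousMap.coe_add, Pi.add_apply, add_smul]
    exact (hX.summable_smul f).tsum_add (hX.summable_smul g)
  map_smul' c f := by
    simp only [ZeroAtInftyContinuousMap.coe_smul, Pi.smul_apply, smul_assoc, RingHom.id_apply]
    exact (hX.summable_smul f).tsum_const_smul c
  norm_map' f := by
    refine le_antisymm (norm_tsum_le_of_forall_le_of_nonneg (norm_nonneg f) fun i => ?_) ?_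
    · rw [norm_smul, hX.norm_eq_one ⟨i, rfl⟩, mul_one]
      exact ZeroAtInftyContinuousMap.norm_toBCF_eq_norm (f := f) ▸ f.toBCF.norm_coe_le_norm i
    · rw [← ZeroAtInftyContinuousMap.norm_toBCF_eq_norm]
      exact (BoundedContinuousFunction.norm_le (norm_nonneg _)).mpr
        (hX.norm_le_norm_tsum_smul hv f.tendsto_cofinite_zero)

lemma IsOrthonormalSet.range_subset_range_tsumSMulLinearIsometry {v : ι → V}
    (hX : IsOrthonormalSet K (Set.range v)) (hv : Function.Injective v) :
    Set.range v ⊆ Set.range (hX.tsumSMulLinearIsometry hv) := by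
  classical
  rintro _ ⟨j, rfl⟩
  let e : C₀(ι, K) := ⟨⟨Pi.single j 1, continuous_of_discreteTopology⟩, by
    rw [cocompact_eq_cofinite]
    exact tendsto_nhds_of_eventually_eq
      ((eventually_cofinite_ne j).mono fun i hi => Pi.single_eq_of_ne hi 1)⟩
  refine ⟨e, (tsum_eq_single j fun i hi => ?_).trans ?_⟩
  · simp [e, Pi.single_eq_of_ne hi]
  · simp [e]

end ZeroAtInfty

lemma Submodule.eq_top_of_forall_norm_sub_lt_one {K V : Type*} [NormedField K]
    [NormedAddCommGroup V] [NormedSpace K V] {F : Submodule K V} (hF : IsClosed (F : Set V))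
    (hsolid : ∀ v : V, ∃ c : K, ‖v‖ = ‖c‖) {ρ : ℝ} (hρ : ρ < 1)
    (hgap : ∀ c : K, ‖c‖ < 1 → ‖c‖ ≤ ρ) (happrox : ∀ u : V, ‖u‖ = 1 → ∃ w ∈ F, ‖u - w‖ < 1) :
    F = ⊤ := by
  rw [Submodule.eq_top_iff']
  by_contra! hF'
  obtain ⟨x, hx, hriesz⟩ := riesz_lemma hF hF' (r := (1 + ρ) / 2) (by linarith)
  have hx0 : 0 < ‖x‖ := norm_pos_iff.mpr fun h => hx (h ▸ F.zero_mem)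
  obtain ⟨c, hc⟩ := hsolid x
  have hc0 : c ≠ 0 := by rintro rfl; simp [hc] at hx0
  obtain ⟨w, hwF, hw⟩ := happrox (c⁻¹ • x) (by
    rw [norm_smul, norm_inv, hc, inv_mul_cancel₀ (norm_ne_zero_iff.mpr hc0)])
  obtain ⟨d, hd⟩ := hsolid (c⁻¹ • x - w)
  have hdist : ‖x - c • w‖ = ‖x‖ * ‖c⁻¹ • x - w‖ := by
    rw [hc, ← norm_smul, smul_sub, smul_inv_smul₀ hc0]
  have hgap' : ‖c⁻¹ • x - w‖ ≤ ρ := hd ▸ hgap d (hd ▸ hw)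
  have hfar := hriesz (c • w) (F.smul_mem c hwF)
  nlinarith

theorem banach_space_is_c0_general
    (K : Type) [NontriviallyNormedField K] [CompleteSpace K]
    (hdv : DiscretelyValued K)
    (V : Type) [NormedAddCommGroup V] [NormedSpace K V] [CompleteSpace V]
    [IsUltrametricDist V]
    (hsolid : ∀ v : V, ∃ c : K, ‖v‖ = ‖c‖) :
    ∃ (E : Type) (_i : TopologicalSpace E), DiscreteTopology E ∧
      Nonempty (V ≃ₗᵢ[K] ZeroAtInftyContinuousMap E K) := by
  obtain ⟨ρ, hρ, hgap⟩ := hdv.exists_norm_le_of_norm_lt_one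
  obtain ⟨X, hX⟩ := exists_maximal_isOrthonormalSet K V
  let _ : TopologicalSpace X := ⊥
  have : DiscreteTopology X := ⟨rfl⟩
  have hXv : IsOrthonormalSet K (Set.range ((↑) : X → V)) := Subtype.range_coe ▸ hX.1
  set T := hXv.tsumSMulLinearIsometry Subtype.val_injective
  have hspan : Submodule.span K X ≤ LinearMap.range T.toLinearMap := Submodule.span_le.mpr
    fun x hx => hXv.range_subset_range_tsumSMulLinearIsometry Subtype.val_injective ⟨⟨x, hx⟩, rfl⟩
  have hsurj : LinearMap.range T.toLinearMap = ⊤ :=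
    Submodule.eq_top_of_forall_norm_sub_lt_one T.isometry.isClosedEmbedding.isClosed_range
      hsolid hρ hgap fun u hu =>
        let ⟨w, hw, hdist⟩ := IsOrthonormalSet.exists_norm_sub_lt_one_of_maximal hX hu
        ⟨w, hspan hw, hdist⟩
  exact ⟨X, inferInstance, inferInstance,
    ⟨(LinearIsometryEquiv.ofSurjective T (LinearMap.range_eq_top.mp hsurj)).symm⟩⟩

/-- Every Banach space `V` with solid norm over a complete nonarchimedean
discretely valued field `K` is isometrically isomorphic to a space `c₀(E, K)` of `K`-valued
functions on a (discrete) index set `E` vanishing at infinity, with the sup norm; i.e., it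
admits an orthogonal basis. -/
theorem banach_space_is_c0
    (K : Type) [NontriviallyNormedField K] [CompleteSpace K] [IsUltrametricDist K]
    (hdv : DiscretelyValued K)
    (V : Type) [NormedAddCommGroup V] [NormedSpace K V] [CompleteSpace V]
    [IsUltrametricDist V]
    (hsolid : ∀ v : V, ∃ c : K, ‖v‖ = ‖c‖) :
    ∃ (E : Type) (_i : TopologicalSpace E), DiscreteTopology E ∧
      Nonempty (V ≃ₗᵢ[K] ZeroAtInftyContinuousMap E K) :=
  banach_space_is_c0_general K hdv V hsolid
end

section
/- Let A be a unital K-Banach algebra with multiplication m of norm ≤ 1, and let a' ∈ A' be a continuous functional such that m'(a') lies in the image of A' ⊗̂ A' inside (A ⊗̂ A)'. Then the map (↦ a') : A → A' defined by a ↦ (x ↦ a'(xa)) is a compact (completely continuous) operator. -/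
/-- An abstract model of the completed (projective) tensor product `V ⊗̂ W` of normed
spaces over a nonarchimedean field `K`: a Banach space `T` together with a continuous
bilinear map `tm` of norm `≤ 1` with dense span, satisfying the universal property of
the completed projective tensor product. -/
structure BTensor (K : Type) [NontriviallyNormedField K] (V W : Type)
    [NormedAddCommGroup V] [NormedSpace K V]
    [NormedAddCommGroup W] [NormedSpace K W] : Type 1 where
  T : Type
  [grp : NormedAddCommGroup T]
  [mod : NormedSpace K T]
  [cpl : CompleteSpace T]
  tm : V →L[K] W →L[K] T
  tm_norm : ∀ v w, ‖tm v w‖ ≤ ‖v‖ * ‖w‖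
  dense_span : Dense (Submodule.span K (Set.range fun p : V × W => (tm p.1) p.2) : Set T)
  lift : ∀ (Z : Type) [NormedAddCommGroup Z] [NormedSpace K Z] [CompleteSpace Z],
      (V →L[K] W →L[K] Z) → (T →L[K] Z)
  lift_tm : ∀ (Z : Type) [NormedAddCommGroup Z] [NormedSpace K Z] [CompleteSpace Z]
      (b : V →L[K] W →L[K] Z) (v : V) (w : W), lift Z b (tm v w) = b v w
  lift_norm : ∀ (Z : Type) [NormedAddCommGroup Z] [NormedSpace K Z] [CompleteSpace Z]
      (b : V →L[K] W →L[K] Z), ‖lift Z b‖ ≤ ‖b‖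

attribute [instance] BTensor.grp BTensor.mod BTensor.cpl

/-!
The left-translate operator `a ↦ (x ↦ a'(x * a))` is the flip of the bilinear form
`m'(a') = P z`. Flipping after `P` is a continuous linear map on `A' ⊗̂ A'`, and it sends a
pure tensor `α ⊗ β` to the rank-one operator `a ↦ β a • α`. Since pure tensors span a dense
subspace, the image of `z` lies in the closure of the finite-rank operators.
-/

namespace ContinuousLinearMap

section FiniteRank

variable (K E F : Type*) [Field K]
  [TopologicalSpace E] [AddCommGroup E] [Module K E]
  [TopologicalSpace F] [AddCommGroup F] [Module K F] [IsTopologicalAddGroup F]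
  [ContinuousConstSMul K F]

def finiteRank : Submodule K (E →L[K] F) :=
  (LinearMap.finiteRange K E F).comap (coeLM K)

variable {K E F}

theorem mem_finiteRank_iff {g : E →L[K] F} :
    g ∈ finiteRank K E F ↔ FiniteDimensional K (LinearMap.range (g : E →ₗ[K] F)) :=
  IsNoetherian.iff_fg

theorem coe_finiteRank :
    (finiteRank K E F : Set (E →L[K] F)) =
      {g : E →L[K] F | FiniteDimensional K (LinearMap.range (g : E →ₗ[K] F))} :=
  Set.ext fun _ => mem_finiteRank_iff

theorem smulRight_mem_finiteRank [TopologicalSpace K] [ContinuousSMul K F] (c : E →L[K] K)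
    (f : F) :
    c.smulRight f ∈ finiteRank K E F := by
  rw [mem_finiteRank_iff]
  refine Submodule.finiteDimensional_of_le (S₂ := K ∙ f) ?_
  rintro _ ⟨x, rfl⟩
  exact Submodule.smul_mem _ _ (Submodule.mem_span_singleton_self f)

end FiniteRank

theorem apply_mem_closure_of_dense_span {R T M : Type*} [Semiring R]
    [TopologicalSpace T] [AddCommMonoid T] [Module R T]
    [TopologicalSpace M] [AddCommMonoid M] [Module R M] (Q : T →L[R] M) {s : Set T}
    (hs : Dense (Submodule.span R s : Set T)) {N : Submodule R M} (hQ : ∀ x ∈ s, Q x ∈ N)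
    (z : T) : Q z ∈ closure (N : Set M) :=
  closure_mono ((Submodule.image_span_subset (Q : T →ₗ[R] M) s N).2 hQ)
    (image_closure_subset_closure_image Q.continuous ⟨z, hs z, rfl⟩)

end ContinuousLinearMap

open ContinuousLinearMap in
theorem left_translate_compact_general
    (K : Type) [NontriviallyNormedField K]
    (A : Type) [NormedRing A] [NormedAlgebra K A]
    (tD : BTensor K (A →L[K] K) (A →L[K] K))
    (P : tD.T →L[K] A →L[K] A →L[K] K)
    (hP : ∀ (α β : A →L[K] K) (x y : A), P (tD.tm α β) x y = α x * β y)
    (a' : A →L[K] K)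
    (hrep : ∃ z : tD.T, ∀ x y : A, P z x y = a' (x * y)) :
    ((ContinuousLinearMap.compL K A A K) a').comp (ContinuousLinearMap.mul K A).flip ∈
      closure {g : A →L[K] A →L[K] K | FiniteDimensional K (LinearMap.range (g : A →ₗ[K] A →L[K] K))} := by
  obtain ⟨z, hz⟩ := hrep
  let Q : tD.T →L[K] A →L[K] A →L[K] K :=
    (flipₗᵢ K A A K).toLinearIsometry.toContinuousLinearMap.comp P
  have hQ : (compL K A A K a').comp (mul K A).flip = Q z := by
    ext a x
    simp [Q, hz x a]
  have hQ_pure (α β : A →L[K] K) : Q (tD.tm α β) = β.smulRight α := by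
    ext a x
    simp [Q, hP, mul_comm]
  rw [hQ, ← coe_finiteRank]
  refine apply_mem_closure_of_dense_span Q tD.dense_span ?_ z
  rintro _ ⟨⟨α, β⟩, rfl⟩
  rw [hQ_pure]
  exact smulRight_mem_finiteRank β α

/-- Let `A` be a unital `K`-Banach algebra (multiplication of norm `≤ 1`)
and `a' ∈ A'` a continuous functional such that `m'(a')` lies in the image of
`A' ⊗̂ A'` inside `(A ⊗̂ A)'` (i.e. `a' ∈ A^⊙`).  Then the operator
`a ↦ (x ↦ a'(x * a)) : A → A'` is compact: it lies in the operator-norm closure of the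
finite-rank operators. Here `tD` models `A' ⊗̂ A'` and `P` is the canonical isometric
pairing `A' ⊗̂ A' → (A ⊗̂ A)'` (viewed as continuous bilinear forms). -/
theorem left_translate_compact
    (K : Type) [NontriviallyNormedField K] [CompleteSpace K] [IsUltrametricDist K]
    (hdv : DiscretelyValued K)
    (A : Type) [NormedRing A] [NormedAlgebra K A] [CompleteSpace A] [IsUltrametricDist A]
    (tD : BTensor K (A →L[K] K) (A →L[K] K))
    (P : tD.T →L[K] A →L[K] A →L[K] K)
    (hP : ∀ (α β : A →L[K] K) (x y : A), P (tD.tm α β) x y = α x * β y)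
    (a' : A →L[K] K)
    (hrep : ∃ z : tD.T, ∀ x y : A, P z x y = a' (x * y)) :
    ((ContinuousLinearMap.compL K A A K) a').comp (ContinuousLinearMap.mul K A).flip ∈
      closure {g : A →L[K] A →L[K] K | FiniteDimensional K (LinearMap.range (g : A →ₗ[K] A →L[K] K))} :=
  left_translate_compact_general K A tD P hP a' hrep
end

section
/- Let A be a unital K-Banach algebra and a' ∈ A^⊙ = (m')⁻¹(A' ⊗̂ A'). Then for every a ∈ A, the left translate a ⇀ a' (defined by (a ⇀ a')(x) = a'(xa)) and the right translate a' ↼ a (defined by (a' ↼ a)(x) = a'(ax)) both lie in A^⊙. -/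
set_option maxHeartbeats 1000000 in
/-- Let `A` be a unital `K`-Banach algebra and `a' ∈ A^⊙`, i.e. `m'(a')`
lies in the image of `A' ⊗̂ A'` in `(A ⊗̂ A)'`.  Then for every `a ∈ A` the left translate
`a ⇀ a' : x ↦ a'(x * a)` and the right translate `a' ↼ a : x ↦ a'(a * x)` again lie
in `A^⊙`.  Here `tD` models `A' ⊗̂ A'` and `P` is the canonical pairing. -/
theorem translates_lie_in_dual_coalgebra
    (K : Type) [NontriviallyNormedField K] [CompleteSpace K] [IsUltrametricDist K]
    (hdv : DiscretelyValued K)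
    (A : Type) [NormedRing A] [NormedAlgebra K A] [CompleteSpace A] [IsUltrametricDist A]
    (tD : BTensor K (A →L[K] K) (A →L[K] K))
    (P : tD.T →L[K] A →L[K] A →L[K] K)
    (hP : ∀ (α β : A →L[K] K) (x y : A), P (tD.tm α β) x y = α x * β y)
    (a' : A →L[K] K)
    (hrep : ∃ z : tD.T, ∀ x y : A, P z x y = a' (x * y)) :
    ∀ a : A,
      (∃ z₁ : tD.T, ∀ x y : A, P z₁ x y = a' ((x * y) * a)) ∧
      (∃ z₂ : tD.T, ∀ x y : A, P z₂ x y = a' (a * (x * y))) := by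
  intro a
  obtain ⟨z, hz⟩ := hrep
  -- right multiplication by `a` and left multiplication by `a`
  set Ra : A →L[K] A := (ContinuousLinearMap.mul K A).flip a with hRa
  set La : A →L[K] A := ContinuousLinearMap.mul K A a with hLa
  have hRa' : ∀ x : A, Ra x = x * a := fun x => rfl
  have hLa' : ∀ x : A, La x = a * x := fun x => rfl
  -- precomposition operators on the dual
  set preR : (A →L[K] K) →L[K] (A →L[K] K) :=
    (ContinuousLinearMap.compL K A A K).flip Ra with hpreR
  set preL : (A →L[K] K) →L[K] (A →L[K] K) :=
    (ContinuousLinearMap.compL K A A K).flip La with hpreL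
  -- bilinear maps into tD.T
  set b₁ : (A →L[K] K) →L[K] (A →L[K] K) →L[K] tD.T :=
    ((ContinuousLinearMap.compL K (A →L[K] K) (A →L[K] K) tD.T).flip preR).comp tD.tm with hb₁
  set b₂ : (A →L[K] K) →L[K] (A →L[K] K) →L[K] tD.T := tD.tm.comp preL with hb₂
  set F₁ : tD.T →L[K] tD.T := tD.lift tD.T b₁ with hF₁
  set F₂ : tD.T →L[K] tD.T := tD.lift tD.T b₂ with hF₂
  have key₁ : ∀ (w : tD.T) (x y : A), P (F₁ w) x y = P w x (y * a) := by
    intro w x y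
    have h : (((P.comp F₁).flip x).flip y : tD.T →L[K] K)
        = ((P.flip x).flip (y * a)) := by
      apply ContinuousLinearMap.ext_on tD.dense_span
      rintro _ ⟨⟨α, β⟩, rfl⟩
      simp only [ContinuousLinearMap.flip_apply, ContinuousLinearMap.coe_comp',
        Function.comp_apply]
      rw [hF₁, tD.lift_tm]
      have : b₁ α β = tD.tm α (preR β) := rfl
      rw [this, hP, hP]
      have : preR β = β.comp Ra := rfl
      rw [this]
      simp [hRa']
    exact DFunLike.congr_fun h w
  have key₂ : ∀ (w : tD.T) (x y : A), P (F₂ w) x y = P w (a * x) y := by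
    intro w x y
    have h : (((P.comp F₂).flip x).flip y : tD.T →L[K] K)
        = ((P.flip (a * x)).flip y) := by
      apply ContinuousLinearMap.ext_on tD.dense_span
      rintro _ ⟨⟨α, β⟩, rfl⟩
      simp only [ContinuousLinearMap.flip_apply, ContinuousLinearMap.coe_comp',
        Function.comp_apply]
      rw [hF₂, tD.lift_tm]
      have : b₂ α β = tD.tm (preL α) β := rfl
      rw [this, hP, hP]
      have : preL α = α.comp La := rfl
      rw [this]
      simp [hLa']
    exact DFunLike.congr_fun h w
  refine ⟨⟨F₁ z, fun x y => ?_⟩, ⟨F₂ z, fun x y => ?_⟩⟩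
  · rw [key₁, hz, mul_assoc]
  · rw [key₂, hz, mul_assoc]
end

section
/- Let C be a K-Banach coalgebra and f : C → D a morphism of Banach coalgebras. Then the norm-closure of the image f(C) is a closed subcoalgebra of D, i.e., Δ_D maps the closure of f(C) into (closure f(C)) ⊗̂ (closure f(C)). -/
variable {K : Type} [NontriviallyNormedField K] [CompleteSpace K]

/-- the map `f ⊗̂ g : C ⊗̂ C → D ⊗̂ D`. -/
noncomputable def BTensor.tmap₂ {C D : Type} [NormedAddCommGroup C] [NormedSpace K C]
    [NormedAddCommGroup D] [NormedSpace K D]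
    (t : BTensor K C C) (tD : BTensor K D D) (f g : C →L[K] D) : t.T →L[K] tD.T :=
  t.lift tD.T (((tD.tm.comp f).flip.comp g).flip)

lemma aux_add_mem_closure {K M : Type} [NontriviallyNormedField K]
    [NormedAddCommGroup M] [NormedSpace K M] (p : Submodule K M) {x y : M}
    (hx : x ∈ closure (p : Set M)) (hy : y ∈ closure (p : Set M)) :
    x + y ∈ closure (p : Set M) := by
  rw [← Submodule.topologicalClosure_coe] at *
  exact Submodule.add_mem _ hx hy

lemma aux_smul_mem_closure {K M : Type} [NontriviallyNormedField K]
    [NormedAddCommGroup M] [NormedSpace K M] (p : Submodule K M) (c : K) {x : M}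
    (hx : x ∈ closure (p : Set M)) : c • x ∈ closure (p : Set M) := by
  rw [← Submodule.topologicalClosure_coe] at *
  exact Submodule.smul_mem _ c hx

/-- If `f : C → D` is a morphism of `K`-Banach coalgebras, then the
norm-closure of the image `f(C)` is a closed subcoalgebra of `D`: the comultiplication
`Δ_D` maps `closure f(C)` into `(closure f(C)) ⊗̂ (closure f(C))`, the latter identified
with the closure in `D ⊗̂ D` of the span of elementary tensors from `closure f(C)`. -/
theorem closure_image_is_subcoalgebra
    [IsUltrametricDist K] (hdv : DiscretelyValued K)
    (C : Type) [NormedAddCommGroup C] [NormedSpace K C] [CompleteSpace C]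
    (D : Type) [NormedAddCommGroup D] [NormedSpace K D] [CompleteSpace D]
    (t : BTensor K C C) (tD : BTensor K D D)
    (Δ : C →L[K] t.T) (ε : C →L[K] K) (ΔD : D →L[K] tD.T) (εD : D →L[K] K)
    (f : C →L[K] D)
    (hfΔ : ΔD.comp f = (t.tmap₂ tD f f).comp Δ)
    (hfε : εD.comp f = ε) :
    ∀ z ∈ closure (Set.range f),
      ΔD z ∈ closure (Submodule.span K
        {w : tD.T | ∃ x ∈ closure (Set.range f), ∃ y ∈ closure (Set.range f),
          w = tD.tm x y} : Set tD.T) := by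
  intro z hz
  set S : Set tD.T := closure (Submodule.span K
      {w : tD.T | ∃ x ∈ closure (Set.range f), ∃ y ∈ closure (Set.range f),
        w = tD.tm x y} : Set tD.T) with hS
  have hSc : IsClosed S := isClosed_closure
  -- step 1: tmap₂ maps all of t.T into S
  have key : ∀ u : t.T, t.tmap₂ tD f f u ∈ S := by
    have hcl : IsClosed ((t.tmap₂ tD f f) ⁻¹' S) := hSc.preimage (t.tmap₂ tD f f).continuous
    intro u
    have hd := t.dense_span
    have hsub : (Submodule.span K (Set.range fun p : C × C => (t.tm p.1) p.2) : Set t.T)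
        ⊆ (t.tmap₂ tD f f) ⁻¹' S := by
      intro v hv
      have : v ∈ Submodule.span K (Set.range fun p : C × C => (t.tm p.1) p.2) := hv
      induction this using Submodule.span_induction with
      | mem x hx =>
        obtain ⟨⟨a, b⟩, rfl⟩ := hx
        have heq : t.tmap₂ tD f f (t.tm a b) = tD.tm (f a) (f b) := by
          simp [BTensor.tmap₂, BTensor.lift_tm]
        have hmem : tD.tm (f a) (f b) ∈
            ({w : tD.T | ∃ x ∈ closure (Set.range f), ∃ y ∈ closure (Set.range f),
              w = tD.tm x y} : Set tD.T) :=
          ⟨f a, subset_closure ⟨a, rfl⟩, f b, subset_closure ⟨b, rfl⟩, rfl⟩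
        show t.tmap₂ tD f f (t.tm a b) ∈ S
        rw [heq]
        exact subset_closure (Submodule.subset_span hmem)
      | zero => show t.tmap₂ tD f f 0 ∈ S; simpa using subset_closure (Submodule.zero_mem _)
      | add x y hxm hym hx hy =>
        show t.tmap₂ tD f f (x + y) ∈ S
        rw [map_add]
        exact aux_add_mem_closure _ (hx hxm) (hy hym)
      | smul c x hxm hx =>
        show t.tmap₂ tD f f (c • x) ∈ S
        rw [map_smul]
        exact aux_smul_mem_closure _ c (hx hxm)
    exact (hcl.closure_subset_iff.mpr hsub) (hd u)
  -- step 2: closure of range f maps into S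
  have hcl2 : IsClosed (ΔD ⁻¹' S) := hSc.preimage ΔD.continuous
  refine (hcl2.closure_subset_iff.mpr ?_) hz
  rintro _ ⟨c, rfl⟩
  have : ΔD (f c) = t.tmap₂ tD f f (Δ c) := by
    have := congrArg (fun g => g c) hfΔ
    simpa using this
  show ΔD (f c) ∈ S
  rw [this]
  exact key (Δ c)
end
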